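/- For the regular pentagon, the second iterate of the Lorenz map φ₅ ∘ (x ↦ 1-x) restricted to its renormalization interval J = [e, 1-e] with e = (3-√5)/2 is again a Lorenz map; moreover there is a unique point b ∈ [e, 1/2) with (φ ∘ φ₅)²(b) = 1/2, namely b = (9-√5)/16. -/

import Mathlib

open Filter Topology

/-- The reduced slap map of the regular pentagon:
`φ₅(x) = -(1/cos(π/5))(x - 1/2) mod 1`. -/
noncomputable def phiRed5 (x : ℝ) : ℝ :=
  Int.fract (-(1 / Real.cos (Real.pi / 5)) * (x - 1 / 2))

/-- The associated centrally symmetric Lorenz map `φ₅' = φ ∘ φ₅`, `φ(x) = 1-x`. -/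
noncomputable def lorenz5 (x : ℝ) : ℝ := 1 - phiRed5 x

/-!
On `[0, 1/2]` and on `(1/2, 1]` the map `φ₅'` is affine with slope `1 / cos(π/5) = √5 - 1`,
and it sends `[e, 1/2)` into `(1/2, 1]` and `(1/2, 1-e]` into `[0, 1/2)`. Hence `(φ₅')²` is
affine on each half of `J` with the positive slope `(√5 - 1)²`, with value `1 - e` at `1/2⁻`
and `e` at `1/2⁺`; uniqueness of `b` is injectivity of the left branch.
-/

open Set

local notation "e₅" => (3 - √5) / 2

lemma sqrt_five_bounds : 11 / 5 < √5 ∧ √5 < 9 / 4 :=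
  ⟨(Real.lt_sqrt (by norm_num)).2 (by norm_num), (Real.sqrt_lt' (by norm_num)).2 (by norm_num)⟩

lemma one_div_cos_pi_div_five : 1 / Real.cos (Real.pi / 5) = √5 - 1 := by
  have h5 : √5 * √5 = 5 := Real.mul_self_sqrt (by norm_num)
  rw [Real.cos_pi_div_five]
  field_simp
  linarith

lemma lorenz5_of_le_half {x : ℝ} (h₀ : 0 ≤ x) (h₁ : x ≤ 1 / 2) :
    lorenz5 x = (√5 - 1) * (x - 1 / 2) + 1 := by
  obtain ⟨hlo, hhi⟩ := sqrt_five_bounds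
  have hfract : Int.fract (-(√5 - 1) * (x - 1 / 2)) = -(√5 - 1) * (x - 1 / 2) :=
    Int.fract_eq_self.2 ⟨by nlinarith, by nlinarith⟩
  rw [lorenz5, phiRed5, one_div_cos_pi_div_five, hfract]
  ring

lemma lorenz5_of_half_lt {x : ℝ} (h₀ : 1 / 2 < x) (h₁ : x ≤ 1) :
    lorenz5 x = (√5 - 1) * (x - 1 / 2) := by
  obtain ⟨hlo, hhi⟩ := sqrt_five_bounds
  have hfract : Int.fract ((√5 - 1) * (x - 1 / 2)) = (√5 - 1) * (x - 1 / 2) :=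
    Int.fract_eq_self.2 ⟨by nlinarith, by nlinarith⟩
  have hpos : 0 < (√5 - 1) * (x - 1 / 2) := mul_pos (by linarith) (by linarith)
  rw [lorenz5, phiRed5, one_div_cos_pi_div_five, neg_mul,
    Int.fract_neg (by rw [hfract]; exact hpos.ne'), hfract]
  ring

lemma lorenz5_comp_lorenz5_of_mem_Ico {x : ℝ} (hx : x ∈ Ico e₅ (1 / 2)) :
    (lorenz5 ∘ lorenz5) x = (√5 - 1) ^ 2 * (x - 1 / 2) + (1 - e₅) := by
  obtain ⟨hlo, hhi⟩ := sqrt_five_bounds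
  obtain ⟨hx₀, hx₁⟩ := hx
  rw [Function.comp_apply, lorenz5_of_le_half (by linarith) hx₁.le,
    lorenz5_of_half_lt (by nlinarith) (by nlinarith)]
  ring

lemma lorenz5_comp_lorenz5_of_mem_Ioc {x : ℝ} (hx : x ∈ Ioc (1 / 2) (1 - e₅)) :
    (lorenz5 ∘ lorenz5) x = (√5 - 1) ^ 2 * (x - 1 / 2) + e₅ := by
  obtain ⟨hlo, hhi⟩ := sqrt_five_bounds
  obtain ⟨hx₀, hx₁⟩ := hx
  rw [Function.comp_apply, lorenz5_of_half_lt hx₀ (by linarith),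
    lorenz5_of_le_half (by nlinarith) (by nlinarith)]
  ring

lemma strictMonoOn_of_eqOn_affine {f : ℝ → ℝ} {s : Set ℝ} {a c d : ℝ} (ha : 0 < a)
    (h : EqOn (fun x ↦ a * (x - c) + d) f s) : StrictMonoOn f s :=
  (StrictMono.strictMonoOn (fun x y hxy ↦ by gcongr) s).congr h

lemma tendsto_nhdsWithin_of_eqOn_affine {f : ℝ → ℝ} {s t : Set ℝ} {a c d : ℝ}
    (ht : t ∈ 𝓝[s] c) (h : EqOn (fun x ↦ a * (x - c) + d) f t) :
    Tendsto f (𝓝[s] c) (𝓝 d) := by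
  have hcont : Continuous fun x ↦ a * (x - c) + d := by fun_prop
  have hlim := (hcont.tendsto c).mono_left (nhdsWithin_le_nhds (s := s))
  rw [sub_self, mul_zero, zero_add] at hlim
  exact hlim.congr' (eventuallyEq_of_mem ht h)

lemma mapsTo_lorenz5_comp_lorenz5 :
    MapsTo (lorenz5 ∘ lorenz5) (Icc e₅ (1 - e₅) \ {1 / 2}) (Icc e₅ (1 - e₅)) := by
  obtain ⟨hlo, hhi⟩ := sqrt_five_bounds
  rintro x ⟨⟨hx₀, hx₁⟩, hx⟩
  rcases Ne.lt_or_gt hx with hlt | hgt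
  · rw [lorenz5_comp_lorenz5_of_mem_Ico ⟨hx₀, hlt⟩]
    constructor <;> nlinarith
  · rw [lorenz5_comp_lorenz5_of_mem_Ioc ⟨hgt, hx₁⟩]
    constructor <;> nlinarith

/-- For the regular pentagon, the second iterate of `φ₅' = φ ∘ φ₅` restricted to
the renormalization interval `J = [e, 1-e]`, `e = (3-√5)/2`, is again a Lorenz
map (with discontinuity `1/2`, left limit `1-e`, right limit `e`, increasing on
both sides, mapping `J` into `J`); moreover `b = (9-√5)/16` is the unique point
of `[e, 1/2)` with `(φ₅')²(b) = 1/2`. -/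
theorem stmt_10 :
    let e : ℝ := (3 - Real.sqrt 5) / 2
    Set.MapsTo (lorenz5 ∘ lorenz5) (Set.Icc e (1 - e) \ {1 / 2}) (Set.Icc e (1 - e)) ∧
    StrictMonoOn (lorenz5 ∘ lorenz5) (Set.Ico e (1 / 2)) ∧
    StrictMonoOn (lorenz5 ∘ lorenz5) (Set.Ioc (1 / 2) (1 - e)) ∧
    Tendsto (lorenz5 ∘ lorenz5) (nhdsWithin (1 / 2) (Set.Iio (1 / 2))) (nhds (1 - e)) ∧
    Tendsto (lorenz5 ∘ lorenz5) (nhdsWithin (1 / 2) (Set.Ioi (1 / 2))) (nhds e) ∧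
    (9 - Real.sqrt 5) / 16 ∈ Set.Ico e (1 / 2) ∧
    lorenz5 (lorenz5 ((9 - Real.sqrt 5) / 16)) = 1 / 2 ∧
    (∀ b ∈ Set.Ico e (1 / 2), lorenz5 (lorenz5 b) = 1 / 2 → b = (9 - Real.sqrt 5) / 16) := by
  dsimp only
  obtain ⟨hlo, hhi⟩ := sqrt_five_bounds
  have hslope : 0 < (√5 - 1) ^ 2 := pow_pos (by linarith) 2
  have hleft : EqOn _ _ (Ico e₅ (1 / 2)) := fun x hx ↦ (lorenz5_comp_lorenz5_of_mem_Ico hx).symm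
  have hright : EqOn _ _ (Ioc (1 / 2) (1 - e₅)) :=
    fun x hx ↦ (lorenz5_comp_lorenz5_of_mem_Ioc hx).symm
  have hmono := strictMonoOn_of_eqOn_affine hslope hleft
  have hb : (9 - √5) / 16 ∈ Ico e₅ (1 / 2) := ⟨by linarith, by linarith⟩
  have hb_val : (lorenz5 ∘ lorenz5) ((9 - √5) / 16) = 1 / 2 := by
    rw [lorenz5_comp_lorenz5_of_mem_Ico hb]
    linear_combination (3 - √5) / 16 * Real.sq_sqrt (show (0 : ℝ) ≤ 5 by norm_num)
  refine ⟨mapsTo_lorenz5_comp_lorenz5, hmono, strictMonoOn_of_eqOn_affine hslope hright,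
    tendsto_nhdsWithin_of_eqOn_affine (Ico_mem_nhdsLT (by linarith)) hleft,
    tendsto_nhdsWithin_of_eqOn_affine (Ioc_mem_nhdsGT (by linarith)) hright, hb, hb_val,
    fun b hb' hval ↦ hmono.injOn hb' hb (hval.trans hb_val.symm)⟩
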